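/- arXiv:1612.09385 — 2 statements merged into one kernel-verified Lean document; each statement's English description precedes it below -/
import Mathlib

section
/- For real numbers α > 0 and 0 ≤ β < 1, the series ∑_{k=0}^∞ (α + βk)^{k-1}/k! · e^{-(α+βk)} converges and equals 1/α. -/
/-!
Abel's identity `∑ C(n,k) x (x + k z)^(k-1) (y - k z)^(n-k) = (x + y)^n`, taken at `x = α`,
`y = n`, `z = β`, says that the quasi-binomial weights
`C(n,k) α (α + β k)^(k-1) (n - β k)^(n-k) / (n + α)^n` are a probability distribution on
`{0, …, n}`. As `n → ∞` each weight tends, by the Poisson limit theorem, to the generalized Poisson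
weight `α (α + β k)^(k-1) e^(-(α + β k)) / k!`. For `0 < β < 1`, comparing with the weights for
`β = 1`, which are at most `1`, bounds all weights by a constant times `(β e^(1-β))^k`, and
`β e^(1-β) < 1`, so Tannery's theorem carries the total mass `1` to the limit. For `β = 0` the
limit is the Poisson distribution.

Abel's identity itself is proved as a polynomial identity in `y`: both sides have the same
derivative recursion, and at `y = -x` the left side is an `n`-th finite difference of a polynomial
of degree `n - 1`.
-/

open Finset Polynomial

section
variable {R : Type*} [CommRing R]

noncomputable def abelPoly (c a : ℕ → R) (n : ℕ) : R[X] :=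
  ∑ k ∈ range (n + 1), C (n.choose k * c k) * (X - C (a k)) ^ (n - k)

theorem derivative_abelPoly (c a : ℕ → R) (n : ℕ) :
    derivative (abelPoly c a (n + 1)) = C ((n : R) + 1) * abelPoly c a n := by
  rw [abelPoly, sum_range_succ, Nat.sub_self, pow_zero, mul_one, derivative_add, derivative_C,
    add_zero, derivative_sum, abelPoly, mul_sum]
  refine sum_congr rfl fun k hk => ?_
  have hchoose : ((n + 1).choose k * (n + 1 - k : ℕ) : R) = (n + 1) * n.choose k := by
    have := congrArg (Nat.cast : ℕ → R) (Nat.choose_mul_succ_eq n k)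
    push_cast at this ⊢
    linear_combination -this
  rw [derivative_C_mul, derivative_X_sub_C_pow, show n + 1 - k - 1 = n - k by omega,
    ← mul_assoc, ← mul_assoc, ← C_mul, ← C_mul]
  congr 2
  linear_combination c k * hchoose

theorem sum_neg_one_pow_choose_mul_add_pow_eq_zero (x z : R) {n : ℕ} (hn : n ≠ 0) :
    ∑ k ∈ range (n + 1), (-1) ^ (n - k) * n.choose k * (x + z * k) ^ (n - 1) = 0 := by
  have hdeg : ((C x + C z * X) ^ (n - 1)).natDegree < n := by
    refine natDegree_pow_le.trans_lt ?_
    have : (C x + C z * X).natDegree ≤ 1 := by compute_degree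
    nlinarith [Nat.sub_add_cancel (Nat.one_le_iff_ne_zero.mpr hn)]
  have := congrFun (fwdDiff_iter_eq_zero_of_degree_lt hdeg) 0
  rw [fwdDiff_iter_eq_sum_shift] at this
  simpa using this
end

section
variable {K : Type*} [Field K]

/- The coefficient `x / (x + z k) * (x + z k)^k` is Abel's `x (x + z k)^(k-1)`, written so that it
is `1` rather than `x` at `k = 0`. -/

theorem eval_neg_abelPoly (x z : K) {n : ℕ} (hn : n ≠ 0) (h : ∀ k ≤ n, x + z * k ≠ 0) :
    eval (-x) (abelPoly (fun k => x / (x + z * k) * (x + z * k) ^ k) (fun k => z * k) n) = 0 := by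
  rw [abelPoly, eval_finsetSum, ← mul_zero x, ← sum_neg_one_pow_choose_mul_add_pow_eq_zero x z hn,
    mul_sum]
  refine sum_congr rfl fun k hk => ?_
  have hk : k ≤ n := Nat.lt_succ_iff.mp (mem_range.mp hk)
  have hpow : (x + z * k) ^ k * (x + z * k) ^ (n - k) = (x + z * k) * (x + z * k) ^ (n - 1) := by
    rw [← pow_add, ← pow_succ']
    congr 1
    omega
  simp only [eval_mul, eval_C, eval_pow, eval_sub, eval_X, show -x - z * k = -(x + z * k) by ring,
    neg_pow (x + z * k)]
  have hcancel :
      x / (x + z * k) * (x + z * k) ^ k * (x + z * k) ^ (n - k) = x * (x + z * k) ^ (n - 1) := by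
    rw [mul_assoc, hpow, ← mul_assoc, div_mul_cancel₀ x (h k hk)]
  linear_combination (-1) ^ (n - k) * n.choose k * hcancel

variable [CharZero K]

theorem abelPoly_eq (x z : K) (n : ℕ) (h : ∀ k ≤ n, x + z * k ≠ 0) :
    abelPoly (fun k => x / (x + z * k) * (x + z * k) ^ k) (fun k => z * k) n = (X + C x) ^ n := by
  induction n with
  | zero => simp [abelPoly, div_self (by simpa using h 0 le_rfl)]
  | succ m ih =>
    set D := abelPoly (fun k => x / (x + z * k) * (x + z * k) ^ k) (fun k => z * k) (m + 1)
      - (X + C x) ^ (m + 1)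
    have hD : derivative D = 0 := by
      rw [derivative_sub, derivative_abelPoly, ih fun k hk => h k (by omega),
        derivative_X_add_C_pow]
      simp
    have hD0 : eval (-x) D = 0 := by
      rw [eval_sub, eval_neg_abelPoly x z (by omega) h]
      simp
    have hconst := eq_C_of_derivative_eq_zero hD
    rw [hconst, eval_C] at hD0
    rw [hD0, map_zero] at hconst
    exact sub_eq_zero.mp hconst

theorem sum_abel_eq_add_pow (x y z : K) (n : ℕ) (h : ∀ k ≤ n, x + z * k ≠ 0) :
    ∑ k ∈ range (n + 1), n.choose k * (x / (x + z * k) * (x + z * k) ^ k) * (y - z * k) ^ (n - k)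
      = (x + y) ^ n := by
  simpa [abelPoly, eval_finsetSum, add_comm y x] using congrArg (eval y) (abelPoly_eq x z n h)
end

open Filter Topology Real Nat

theorem add_pow_le_pow_mul_exp {a b : ℝ} (ha : 0 < a) (hab : 0 ≤ a + b) (m : ℕ) :
    (a + b) ^ m ≤ a ^ m * exp (m * b / a) := by
  calc (a + b) ^ m = (a * (1 + b / a)) ^ m := by field_simp
    _ ≤ (a * exp (b / a)) ^ m := by
      have : 0 ≤ a * (1 + b / a) := by field_simp; linarith
      gcongr
      linarith [add_one_le_exp (b / a)]
    _ = a ^ m * exp (m * b / a) := by rw [mul_pow, ← exp_nat_mul, mul_div_assoc]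

theorem mul_exp_one_sub_lt_one {β : ℝ} (hβ : β < 1) : β * exp (1 - β) < 1 := by
  have := add_one_lt_exp (sub_ne_zero.mpr hβ.ne)
  rw [← lt_div_iff₀ (exp_pos _), one_div, ← exp_neg, neg_sub]
  linarith

/- Consul's quasi-binomial distribution with `p = α / (n + α)` and `φ = β / (n + α)`, written as
`α / (α + β k)` times the binomial weight with success probability `(α + β k) / (n + α)`. -/
noncomputable def quasiBinomial (α β : ℝ) (n k : ℕ) : ℝ :=
  α / (α + β * k) *
    (n.choose k * ((α + β * k) / (n + α)) ^ k * (1 - (α + β * k) / (n + α)) ^ (n - k))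

noncomputable def generalizedPoisson (α β : ℝ) (k : ℕ) : ℝ :=
  α / (α + β * k) * (exp (-(α + β * k)) * (α + β * k) ^ k / k !)

section
variable {α β : ℝ}

theorem quasiBinomial_eq (hα : 0 < α) {n k : ℕ} (hk : k ≤ n) :
    quasiBinomial α β n k =
      n.choose k * (α / (α + β * k) * (α + β * k) ^ k) * (n - β * k) ^ (n - k) / (n + α) ^ n := by
  have hn : (n : ℝ) + α ≠ 0 := by positivity
  rw [quasiBinomial, one_sub_div hn, div_pow, div_pow, ← pow_sub_mul_pow _ hk]
  field_simp
  ring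

theorem quasiBinomial_eq_zero_of_lt (α β : ℝ) {n k : ℕ} (hk : n < k) :
    quasiBinomial α β n k = 0 := by
  simp [quasiBinomial, choose_eq_zero_of_lt hk]

theorem quasiBinomial_nonneg (hα : 0 < α) (hβ0 : 0 ≤ β) (hβ1 : β ≤ 1) (n k : ℕ) :
    0 ≤ quasiBinomial α β n k := by
  rcases le_or_gt k n with hk | hk
  · have hkn : (k : ℝ) ≤ n := Nat.cast_le.mpr hk
    have : 0 ≤ (n : ℝ) - β * k := by nlinarith [(Nat.cast_nonneg k : (0 : ℝ) ≤ k)]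
    rw [quasiBinomial_eq hα hk]
    positivity
  · rw [quasiBinomial_eq_zero_of_lt α β hk]

theorem hasSum_quasiBinomial (hα : 0 < α) (hβ : 0 ≤ β) (n : ℕ) :
    HasSum (quasiBinomial α β n) 1 := by
  have hsum : ∑ k ∈ range (n + 1), quasiBinomial α β n k = 1 := by
    rw [sum_congr rfl fun k hk => quasiBinomial_eq hα (Nat.lt_succ_iff.mp (mem_range.mp hk)),
      ← sum_div, sum_abel_eq_add_pow α n β n fun k _ => by positivity, add_comm,
      div_self (by positivity)]
  exact hsum ▸ hasSum_sum_of_ne_finset_zero fun k hk =>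
    quasiBinomial_eq_zero_of_lt α β (by simpa using hk)

theorem quasiBinomial_le_one (hα : 0 < α) (hβ0 : 0 ≤ β) (hβ1 : β ≤ 1) (n k : ℕ) :
    quasiBinomial α β n k ≤ 1 :=
  le_hasSum (hasSum_quasiBinomial hα hβ0 n) k fun j _ => quasiBinomial_nonneg hα hβ0 hβ1 n j

theorem tendsto_quasiBinomial (α β : ℝ) (k : ℕ) :
    Tendsto (quasiBinomial α β · k) atTop (𝓝 (generalizedPoisson α β k)) := by
  have h : Tendsto (fun n : ℕ => n * ((α + β * k) / (n + α))) atTop (𝓝 (α + β * k)) := by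
    have := (tendsto_natCast_div_add_atTop α).mul_const (α + β * k)
    rw [one_mul] at this
    exact this.congr fun n => by ring
  exact (ProbabilityTheory.tendsto_choose_mul_pow_of_tendsto_mul_atTop k h).const_mul _

theorem quasiBinomial_le (hα : 0 < α) (hβ0 : 0 < β) (hβ1 : β ≤ 1) (n k : ℕ) :
    quasiBinomial α β n k ≤
      exp (α * (1 - β) / β) / β * (β * exp (1 - β)) ^ k * quasiBinomial α 1 n k := by
  rcases lt_or_ge n k with hk | hk
  · simp [quasiBinomial_eq_zero_of_lt _ _ hk]
  have hkn : (k : ℝ) ≤ n := Nat.cast_le.mpr hk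
  have hk0 : (0 : ℝ) ≤ k := Nat.cast_nonneg k
  have hweight : α / (α + β * k) ≤ β⁻¹ * (α / (α + k)) := by
    rw [← div_eq_inv_mul, div_div]
    exact div_le_div_of_nonneg_left hα.le (by positivity) (by nlinarith)
  have hbase : (α + β * k) ^ k ≤ (β * (α + k)) ^ k * exp (α * (1 - β) / β) := by
    have h := add_pow_le_pow_mul_exp (a := β * (α + k)) (b := α * (1 - β)) (by positivity)
      (by nlinarith) k
    rw [show β * (α + k) + α * (1 - β) = α + β * k by ring] at h
    refine h.trans (mul_le_mul_of_nonneg_left (exp_le_exp.mpr ?_) (by positivity))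
    rw [div_le_div_iff₀ (by positivity) hβ0]
    have : 0 ≤ α * (1 - β) := by nlinarith
    nlinarith [mul_nonneg (mul_nonneg this hβ0.le) hα.le]
  have hrest : ((n : ℝ) - β * k) ^ (n - k) ≤ exp (k * (1 - β)) * ((n : ℝ) - k) ^ (n - k) := by
    rcases hk.eq_or_lt with rfl | hlt
    · simpa using one_le_exp (by nlinarith)
    have h := add_pow_le_pow_mul_exp (a := (n : ℝ) - k) (b := k * (1 - β))
      (by linarith [(Nat.cast_lt (α := ℝ)).mpr hlt]) (by nlinarith) (n - k)
    rw [Nat.cast_sub hk, mul_div_cancel_left₀ _ (by linarith [(Nat.cast_lt (α := ℝ)).mpr hlt]),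
      show (n : ℝ) - k + k * (1 - β) = n - β * k by ring] at h
    exact h.trans_eq (mul_comm _ _)
  rw [quasiBinomial_eq hα hk, quasiBinomial_eq hα hk]
  calc
    _ ≤ n.choose k * (β⁻¹ * (α / (α + k)) * ((β * (α + k)) ^ k * exp (α * (1 - β) / β))) *
        (exp (k * (1 - β)) * ((n : ℝ) - k) ^ (n - k)) / (n + α) ^ n := by
      have : 0 ≤ (n : ℝ) - β * k := by nlinarith
      gcongr
    _ = _ := by
      rw [exp_nat_mul, mul_pow]
      simp only [one_mul]
      ring

theorem hasSum_generalizedPoisson (hα : 0 < α) (hβ0 : 0 ≤ β) (hβ1 : β < 1) :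
    HasSum (generalizedPoisson α β) 1 := by
  rcases hβ0.eq_or_lt with rfl | hβ0
  · convert ProbabilityTheory.hasSum_one_poissonMeasure α.toNNReal using 2 with k
    simp [generalizedPoisson, hα.ne', hα.le]
  set bound := fun k : ℕ => exp (α * (1 - β) / β) / β * (β * exp (1 - β)) ^ k
  have hbound (n k : ℕ) : ‖quasiBinomial α β n k‖ ≤ bound k := by
    rw [norm_of_nonneg (quasiBinomial_nonneg hα hβ0.le hβ1.le n k)]
    refine (quasiBinomial_le hα hβ0 hβ1.le n k).trans (mul_le_of_le_one_right (by positivity) ?_)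
    exact quasiBinomial_le_one hα zero_le_one le_rfl n k
  have hsummable : Summable bound :=
    (summable_geometric_of_lt_one (by positivity) (mul_exp_one_sub_lt_one hβ1)).mul_left _
  have hlim := tendsto_tsum_of_dominated_convergence hsummable (tendsto_quasiBinomial α β)
    (.of_forall hbound)
  simp only [fun n => (hasSum_quasiBinomial hα hβ0.le n).tsum_eq] at hlim
  refine (Summable.of_norm_bounded hsummable fun k => ?_).hasSum_iff.mpr
    (tendsto_nhds_unique hlim tendsto_const_nhds)
  exact le_of_tendsto (tendsto_quasiBinomial α β k).norm (.of_forall (hbound · k))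
end

theorem jain_S0 (α β : ℝ) (hα : 0 < α) (hβ0 : 0 ≤ β) (hβ1 : β < 1) :
    HasSum (fun k : ℕ =>
      (α + β * k) ^ (k : ℕ) / (α + β * k) / (Nat.factorial k) * Real.exp (-(α + β * k)))
      (1 / α) := by
  have h : HasSum (fun k => generalizedPoisson α β k / α) (1 / α) :=
    (hasSum_generalizedPoisson hα hβ0 hβ1).div_const α
  convert h using 2 with k
  rw [generalizedPoisson]
  field_simp
end

section
/- For real numbers α > 0 and 0 ≤ β < 1, setting p = 1/(1-β), the series S(3,α,β) = ∑_{k=0}^∞ (α + βk)^{k+2}/k! · e^{-(α+βk)} equals α²p³ + 3αβ²p⁴ + β³(1+2β)p⁵. -/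
/-!
Write `t_k(α) = (α + βk)^k e^{-(α + βk)} / k!`, `a_k(α) = α (α + βk)^{k-1} e^{-(α + βk)} / k!`
(`a_0 = e^{-α}`), `T = ∑ t_k` and `g = ∑ a_k`. Abel's identity, in the form
`∑_{i+j=n} a_i(x) t_j(y) = t_n(x + y)`, makes the Cauchy product give `g(x) T(y) = T(x + y)`, so
`T(y + n x) = g(x)^n T(y)`. The Chernoff bound `u^k / k! ≤ e^{(1+ε)u} / (1+ε)^k` shows that `T`
grows more slowly than `e^{εα}` for every small `ε > 0`, and Stirling's bound for the term with
`k ≤ α + βk ≤ k + 1` gives `T(α) ≥ c / α`. Hence `g(x)^n` neither grows nor decays exponentially,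
so `g ≡ 1` and `T` is constant; as `t_{k+1}(α) = a_{k+1}(α) + β t_k(α + β)`, `T = 1 + βT`.
Finally `S_{m+1}(α) = α S_m(α) + β S_{m+1}(α + β)`, the claimed polynomials satisfy the same
recurrence, and a solution of `h(α) = β h(α + β)` growing more slowly than `β^{-α/β}` vanishes.
-/

open Real Finset Filter Topology
open scoped Nat

lemma sum_antidiagonal_neg_one_pow_div_factorial_mul_pow_eq_zero {m n : ℕ} (h : m < n)
    (x c : ℝ) : ∑ p ∈ antidiagonal n, (-1) ^ p.2 / (p.1 ! * p.2 !) * (x + c * p.1) ^ m = 0 := by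
  open Polynomial in
  have hdeg : ((C c * X + C x) ^ m).natDegree < n :=
    (natDegree_pow_le_of_le m natDegree_linear_le).trans_lt (by omega)
  have hΔ := congrFun (Polynomial.fwdDiff_iter_eq_zero_of_degree_lt hdeg) 0
  simp only [fwdDiff_iter_eq_sum_shift, zero_add, nsmul_eq_mul, mul_one, zsmul_eq_mul,
    Int.cast_mul, Int.cast_pow, Int.cast_neg, Int.cast_one, Int.cast_natCast, eval_pow, eval_add,
    eval_mul, eval_C, eval_X, Pi.zero_apply] at hΔ
  rw [Nat.sum_antidiagonal_eq_sum_range_succ_mk]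
  calc _ = (n ! : ℝ)⁻¹ *
        ∑ k ∈ range (n + 1), (-1) ^ (n - k) * (n.choose k : ℝ) * (x + c * k) ^ m := by
        rw [mul_sum]
        refine sum_congr rfl fun k hk => ?_
        have := Nat.choose_mul_factorial_mul_factorial (Nat.lt_succ_iff.mp (mem_range.mp hk))
        field_simp
        rw [← this]
        push_cast
        ring
    _ = 0 := by simp only [add_comm x, hΔ, mul_zero]

lemma hasDerivAt_add_pow_succ_div_factorial (a y : ℝ) (j : ℕ) :
    HasDerivAt (fun y => (y + a) ^ (j + 1) / (j + 1)!) ((y + a) ^ j / j !) y := by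
  refine ((((hasDerivAt_id y).add_const a).fun_pow (j + 1)).div_const _).congr_deriv ?_
  rw [Nat.factorial_succ, add_tsub_cancel_right]
  push_cast
  field_simp
  rfl

lemma pow_div_factorial_le_exp_mul_div_pow {x t : ℝ} (hx : 0 ≤ x) (ht : 0 < t) (k : ℕ) :
    x ^ k / k ! ≤ exp (t * x) / t ^ k := by
  rw [le_div_iff₀ (by positivity)]
  calc x ^ k / k ! * t ^ k = (t * x) ^ k / k ! := by ring
    _ ≤ exp (t * x) := pow_div_factorial_le_exp _ (by positivity) k

lemma factorial_le_exp_one_mul_sqrt_mul_pow {k : ℕ} (hk : k ≠ 0) :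
    (k ! : ℝ) ≤ exp 1 * √k * (k / exp 1) ^ k := by
  obtain ⟨j, rfl⟩ := Nat.exists_eq_add_one_of_ne_zero hk
  have h : Stirling.stirlingSeq (j + 1) ≤ Stirling.stirlingSeq 1 :=
    Stirling.stirlingSeq'_antitone (Nat.zero_le j)
  rw [Stirling.stirlingSeq_one, Stirling.stirlingSeq, div_le_iff₀ (by positivity)] at h
  refine h.trans_eq ?_
  rw [sqrt_mul zero_le_two]
  field_simp

lemma exp_neg_two_div_le_pow_div_factorial_mul_exp {k : ℕ} {x : ℝ} (hk : k ≠ 0) (hkx : k ≤ x)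
    (hxk : x ≤ k + 1) : exp (-2) / k ≤ x ^ k / k ! * exp (-x) := by
  have hk0 : (0 : ℝ) < k := by positivity
  have hx : 0 ≤ x := by linarith
  have hfac : (k ! : ℝ) ≤ k * k ^ k * exp (1 - k) :=
    calc (k ! : ℝ) ≤ exp 1 * √k * (k / exp 1) ^ k := factorial_le_exp_one_mul_sqrt_mul_pow hk
      _ ≤ exp 1 * k * (k / exp 1) ^ k := by
          gcongr
          exact sqrt_le_self_iff.mpr (.inr (by exact_mod_cast Nat.one_le_iff_ne_zero.mpr hk))
      _ = k * k ^ k * exp (1 - k) := by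
          rw [div_pow, ← exp_nat_mul, mul_one, exp_sub]
          field_simp
  calc exp (-2) / k = k ^ k / (k * k ^ k * exp (1 - k)) * exp (-(k + 1)) := by
        field_simp
        rw [← exp_add]
        ring_nf
    _ ≤ x ^ k / k ! * exp (-x) := by gcongr

lemma summable_succ_pow_mul_geometric {ρ : ℝ} (h0 : 0 < ρ) (h1 : ρ < 1) (m : ℕ) :
    Summable fun k : ℕ => ((k : ℝ) + 1) ^ m * ρ ^ k := by
  have hρ : ‖ρ‖ < 1 := by rwa [norm_of_nonneg h0.le]
  have := (summable_nat_add_iff (f := fun k : ℕ => (k : ℝ) ^ m * ρ ^ k) 1).mpr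
    (summable_pow_mul_geometric_of_norm_lt_one m hρ)
  refine (this.div_const ρ).congr fun k => ?_
  push_cast
  field_simp
  ring

lemma le_of_eventually_mul_pow_le {a r s C : ℝ} {M : ℕ} (ha : 0 < a) (hs : 0 ≤ s)
    (h : ∀ᶠ n : ℕ in atTop, a * r ^ n ≤ C * n ^ M * s ^ n) : r ≤ s := by
  by_contra! hsr
  have hr : 0 < r := hs.trans_lt hsr
  have hlim : Tendsto (fun n : ℕ => C * ((n : ℝ) ^ M * (s / r) ^ n)) atTop (𝓝 0) := by
    simpa using (tendsto_pow_const_mul_const_pow_of_lt_one M (div_nonneg hs hr.le)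
      ((div_lt_one hr).mpr hsr)).const_mul C
  have : a ≤ 0 := ge_of_tendsto hlim <| h.mono fun n hn => by
    rw [div_pow, ← mul_div_assoc, ← mul_div_assoc, le_div_iff₀ (pow_pos hr n)]
    linarith
  linarith

lemma tsum_eq_tsum_add_mul_tsum_of_succ {f g h : ℕ → ℝ} {c : ℝ} (hg : Summable g)
    (hh : Summable h) (h0 : f 0 = g 0) (hsucc : ∀ k, f (k + 1) = g (k + 1) + c * h k) :
    ∑' k, f k = ∑' k, g k + c * ∑' k, h k := by
  have hg' : Summable fun k => g (k + 1) := (summable_nat_add_iff 1).mpr hg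
  have hf : Summable f := (summable_nat_add_iff 1).mp <| by
    simp_rw [hsucc]
    exact hg'.add (hh.mul_left c)
  rw [hf.tsum_eq_zero_add, hg.tsum_eq_zero_add, h0, tsum_congr hsucc,
    hg'.tsum_add (hh.mul_left c), tsum_mul_left, add_assoc]

namespace GenPoisson

def abelPoly (c x : ℝ) : ℕ → ℝ
  | 0 => 1
  | i + 1 => x * (x + c * (i + 1 : ℕ)) ^ i

lemma abelPoly_mul_pow {c x : ℝ} {i j n : ℕ} (h : i + j = n + 1) :
    abelPoly c x i * (x + c * i) ^ j = x * (x + c * i) ^ n := by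
  cases i with
  | zero =>
    obtain rfl : j = n + 1 := by omega
    rw [abelPoly, one_mul, Nat.cast_zero, mul_zero, add_zero, pow_succ']
  | succ i =>
    rw [abelPoly, mul_assoc, ← pow_add]
    congr 2
    omega

lemma abelPoly_nonneg {c x : ℝ} (hc : 0 ≤ c) (hx : 0 ≤ x) : ∀ i, 0 ≤ abelPoly c x i
  | 0 => zero_le_one
  | _ + 1 => by rw [abelPoly]; positivity

lemma abelPoly_le_pow {c x : ℝ} (hc : 0 ≤ c) (hx : 0 ≤ x) :
    ∀ i, abelPoly c x i ≤ (x + c * i) ^ i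
  | 0 => by simp [abelPoly]
  | i + 1 => by
    rw [abelPoly, pow_succ' _ i]
    gcongr
    exact le_add_of_nonneg_right (by positivity)

lemma abel_sum_eq_zero_at_root (c x : ℝ) (n : ℕ) :
    ∑ p ∈ antidiagonal (n + 1),
      abelPoly c x p.1 / p.1 ! * ((-(x + c * (n + 1 : ℕ)) + c * p.2) ^ p.2 / p.2 !) = 0 := by
  calc _ = x * ∑ p ∈ antidiagonal (n + 1), (-1) ^ p.2 / (p.1 ! * p.2 !) * (x + c * p.1) ^ n := by
        rw [mul_sum]
        refine sum_congr rfl fun p hp => ?_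
        have hp : p.1 + p.2 = n + 1 := mem_antidiagonal.mp hp
        have hroot : -(x + c * (n + 1 : ℕ)) + c * p.2 = -(x + c * p.1) := by
          rw [← hp]
          push_cast
          ring
        rw [hroot, neg_pow]
        linear_combination
          ((-1) ^ p.2 / (p.1 ! * p.2 ! : ℝ)) * abelPoly_mul_pow (c := c) (x := x) hp
    _ = 0 := by
        rw [sum_antidiagonal_neg_one_pow_div_factorial_mul_pow_eq_zero (by omega), mul_zero]

theorem abel_identity (c x y : ℝ) (n : ℕ) :
    ∑ p ∈ antidiagonal n, abelPoly c x p.1 / p.1 ! * ((y + c * p.2) ^ p.2 / p.2 !) =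
      (x + y + c * n) ^ n / n ! := by
  induction n generalizing y with
  | zero => simp [abelPoly]
  | succ n ih =>
    -- Both sides have `y`-derivative given by the case `n` at `y + c`, and both vanish at
    -- `y = -(x + c (n + 1))`.
    set G : ℝ → ℝ := fun y => (x + y + c * (n + 1 : ℕ)) ^ (n + 1) / (n + 1)!
    have hG : ∀ y, HasDerivAt G ((x + y + c * (n + 1 : ℕ)) ^ n / n !) y := fun y => by
      have hG' : G = fun y => (y + (x + c * (n + 1 : ℕ))) ^ (n + 1) / (n + 1)! :=
        funext fun y => by simp only [G]; ring_nf
      rw [hG']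
      exact (hasDerivAt_add_pow_succ_div_factorial _ y n).congr_deriv (by ring_nf)
    have hF : ∀ y, HasDerivAt (fun y => ∑ p ∈ antidiagonal (n + 1),
        abelPoly c x p.1 / p.1 ! * ((y + c * p.2) ^ p.2 / p.2 !))
        ((x + y + c * (n + 1 : ℕ)) ^ n / n !) y := fun y => by
      simp_rw [Nat.sum_antidiagonal_succ', pow_zero]
      refine ((HasDerivAt.fun_sum fun (p : ℕ × ℕ) _ =>
        (hasDerivAt_add_pow_succ_div_factorial _ y p.2).const_mul _).const_add _).congr_deriv ?_
      calc _ = ∑ p ∈ antidiagonal n,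
            abelPoly c x p.1 / p.1 ! * ((y + c + c * p.2) ^ p.2 / p.2 !) := by
            push_cast
            ring_nf
        _ = _ := by
            rw [ih]
            push_cast
            ring_nf
    have := eq_of_fderiv_eq (fun y => (hF y).differentiableAt) (fun y => (hG y).differentiableAt)
      (fun y => by rw [(hF y).hasFDerivAt.fderiv, (hG y).hasFDerivAt.fderiv])
      (-(x + c * (n + 1 : ℕ))) (by rw [abel_sum_eq_zero_at_root]; simp [G])
    exact congrFun this y

variable {β α ε : ℝ}

noncomputable def term (β : ℝ) (m : ℕ) (α : ℝ) (k : ℕ) : ℝ :=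
  (α + β * k) ^ (k + m) / k ! * exp (-(α + β * k))

noncomputable def abelTerm (β α : ℝ) (k : ℕ) : ℝ :=
  abelPoly β α k / k ! * exp (-(α + β * k))

/-- `S β m α` is the paper's `S(m + 1, α, β)`. -/
noncomputable def S (β : ℝ) (m : ℕ) (α : ℝ) : ℝ := ∑' k, term β m α k

noncomputable def abelSum (β α : ℝ) : ℝ := ∑' k, abelTerm β α k

lemma term_nonneg (hβ : 0 ≤ β) (hα : 0 ≤ α) (m k : ℕ) : 0 ≤ term β m α k := by
  unfold term
  positivity

lemma abelTerm_nonneg (hβ : 0 ≤ β) (hα : 0 ≤ α) (k : ℕ) : 0 ≤ abelTerm β α k := by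
  unfold abelTerm
  have := abelPoly_nonneg hβ hα k
  positivity

lemma abelTerm_le_term (hβ : 0 ≤ β) (hα : 0 ≤ α) (k : ℕ) : abelTerm β α k ≤ term β 0 α k := by
  unfold abelTerm term
  gcongr
  exact abelPoly_le_pow hβ hα k

lemma exp_mul_lt_one_add (hβ : 0 ≤ β) (hε : 0 < ε) (h : β * (1 + ε) < 1) :
    exp (ε * β) < 1 + ε := by
  have hεβ : ε * β < 1 := by nlinarith
  calc exp (ε * β) ≤ 1 / (1 - ε * β) := exp_bound_div_one_sub_of_interval (by positivity) hεβ
    _ < 1 + ε := by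
        rw [div_lt_iff₀ (by linarith)]
        nlinarith

lemma eventually_pos_and_mul_one_add_lt_one (hβ1 : β < 1) :
    ∀ᶠ ε in 𝓝[>] (0 : ℝ), 0 < ε ∧ β * (1 + ε) < 1 := by
  have : Tendsto (fun ε : ℝ => β * (1 + ε)) (𝓝 0) (𝓝 β) :=
    (by fun_prop : Continuous fun ε : ℝ => β * (1 + ε)).tendsto' 0 β (by simp)
  exact Filter.Eventually.and self_mem_nhdsWithin
    (nhdsWithin_le_nhds (this.eventually (gt_mem_nhds hβ1)))

lemma term_le_mul_geometric (hβ0 : 0 ≤ β) (hβ1 : β ≤ 1) (hα : 0 ≤ α) (hε : 0 < ε) (m k : ℕ) :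
    term β m α k ≤
      exp (ε * α) * (α + 1) ^ m * (((k : ℝ) + 1) ^ m * (exp (ε * β) / (1 + ε)) ^ k) := by
  set x := α + β * k
  have hx : 0 ≤ x := by positivity
  have hxm : x ^ m ≤ ((α + 1) * (k + 1)) ^ m := by
    gcongr
    nlinarith [mul_le_of_le_one_left (Nat.cast_nonneg k) hβ1]
  have hexp : exp (ε * x) = exp (ε * α) * exp (ε * β) ^ k := by
    rw [← exp_nat_mul, ← exp_add]
    simp only [x]
    ring_nf
  calc term β m α k = x ^ m * (x ^ k / k !) * exp (-x) := by unfold term; ring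
    _ ≤ ((α + 1) * (k + 1)) ^ m * (exp ((1 + ε) * x) / (1 + ε) ^ k) * exp (-x) := by
        have := pow_div_factorial_le_exp_mul_div_pow hx (by linarith : 0 < 1 + ε) k
        gcongr
    _ = _ := by
        rw [mul_pow, div_pow, add_mul, one_mul, exp_add, hexp]
        field_simp
        rw [← exp_add, add_neg_cancel, exp_zero]

lemma summable_term (hβ0 : 0 ≤ β) (hβ1 : β < 1) (hα : 0 ≤ α) (m : ℕ) :
    Summable (term β m α) := by
  obtain ⟨ε, hε, hβε⟩ := (eventually_pos_and_mul_one_add_lt_one hβ1).exists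
  have hρ : exp (ε * β) / (1 + ε) < 1 :=
    (div_lt_one (by positivity)).mpr (exp_mul_lt_one_add hβ0 hε hβε)
  exact .of_nonneg_of_le (term_nonneg hβ0 hα m) (term_le_mul_geometric hβ0 hβ1.le hα hε m)
    ((summable_succ_pow_mul_geometric (by positivity) hρ m).mul_left _)

lemma summable_abelTerm (hβ0 : 0 ≤ β) (hβ1 : β < 1) (hα : 0 ≤ α) :
    Summable (abelTerm β α) :=
  .of_nonneg_of_le (abelTerm_nonneg hβ0 hα) (abelTerm_le_term hβ0 hα)
    (summable_term hβ0 hβ1 hα 0)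

lemma exists_S_le (hβ0 : 0 ≤ β) (hε : 0 < ε) (hβε : β * (1 + ε) < 1) (m : ℕ) :
    ∃ C, ∀ α, 0 ≤ α → S β m α ≤ C * (exp (ε * α) * (α + 1) ^ m) := by
  have hβ1 : β < 1 := by nlinarith
  have hρ : exp (ε * β) / (1 + ε) < 1 :=
    (div_lt_one (by positivity)).mpr (exp_mul_lt_one_add hβ0 hε hβε)
  have hsum := summable_succ_pow_mul_geometric (by positivity) hρ m
  refine ⟨∑' k : ℕ, ((k : ℝ) + 1) ^ m * (exp (ε * β) / (1 + ε)) ^ k, fun α hα => ?_⟩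
  calc S β m α ≤ ∑' k : ℕ, exp (ε * α) * (α + 1) ^ m *
        (((k : ℝ) + 1) ^ m * (exp (ε * β) / (1 + ε)) ^ k) :=
        (summable_term hβ0 hβ1 hα m).tsum_le_tsum (term_le_mul_geometric hβ0 hβ1.le hα hε m)
          (hsum.mul_left _)
    _ = _ := by rw [tsum_mul_left, mul_comm]

lemma exp_neg_two_mul_div_le_S_zero (hβ0 : 0 ≤ β) (hβ1 : β < 1) (hα : 1 ≤ α) :
    exp (-2) * (1 - β) / α ≤ S β 0 α := by
  have h1β : 0 < 1 - β := by linarith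
  set k := ⌊α / (1 - β)⌋₊
  have hk1 : 1 ≤ k := Nat.le_floor (by rw [Nat.cast_one, one_le_div h1β]; linarith)
  have hk : (k : ℝ) ≤ α / (1 - β) := Nat.floor_le (by positivity)
  have hk' : α / (1 - β) < k + 1 := Nat.lt_floor_add_one _
  rw [le_div_iff₀ h1β] at hk
  rw [div_lt_iff₀ h1β] at hk'
  calc exp (-2) * (1 - β) / α ≤ exp (-2) / k := by
        rw [div_le_div_iff₀ (by linarith) (by positivity)]
        nlinarith [exp_pos (-2)]
    _ ≤ term β 0 α k := by
        rw [term, add_zero]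
        exact exp_neg_two_div_le_pow_div_factorial_mul_exp (by omega) (by nlinarith)
          (by nlinarith)
    _ ≤ S β 0 α := (summable_term hβ0 hβ1 (by linarith) 0).le_tsum k
        fun j _ => term_nonneg hβ0 (by linarith) 0 j

lemma abelSum_mul_S_zero (hβ0 : 0 ≤ β) (hβ1 : β < 1) {x y : ℝ} (hx : 0 ≤ x) (hy : 0 ≤ y) :
    abelSum β x * S β 0 y = S β 0 (x + y) := by
  have hnx : Summable fun k => ‖abelTerm β x k‖ := (summable_abelTerm hβ0 hβ1 hx).congr
    fun k => (norm_of_nonneg (abelTerm_nonneg hβ0 hx k)).symm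
  have hny : Summable fun k => ‖term β 0 y k‖ := (summable_term hβ0 hβ1 hy 0).congr
    fun k => (norm_of_nonneg (term_nonneg hβ0 hy 0 k)).symm
  rw [abelSum, S, S, tsum_mul_tsum_eq_tsum_sum_antidiagonal_of_summable_norm hnx hny]
  refine tsum_congr fun n => ?_
  calc ∑ p ∈ antidiagonal n, abelTerm β x p.1 * term β 0 y p.2
      = (∑ p ∈ antidiagonal n, abelPoly β x p.1 / p.1 ! * ((y + β * p.2) ^ p.2 / p.2 !)) *
          exp (-(x + y + β * n)) := by
        rw [sum_mul]
        refine sum_congr rfl fun p hp => ?_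
        rw [← mem_antidiagonal.mp hp, abelTerm, term, add_zero, Nat.cast_add,
          show -(x + y + β * (p.1 + p.2 : ℝ)) = -(x + β * p.1) + -(y + β * p.2) by ring, exp_add]
        ring
    _ = term β 0 (x + y) n := by rw [abel_identity, term, add_zero]

lemma S_zero_add_mul (hβ0 : 0 ≤ β) (hβ1 : β < 1) {x y : ℝ} (hx : 0 ≤ x) (hy : 0 ≤ y) (n : ℕ) :
    S β 0 (y + n * x) = abelSum β x ^ n * S β 0 y := by
  induction n with
  | zero => simp
  | succ n ih =>
    rw [pow_succ', mul_assoc, ← ih, abelSum_mul_S_zero hβ0 hβ1 hx (by positivity)]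
    push_cast
    ring_nf

lemma abelSum_le_one (hβ0 : 0 ≤ β) (hβ1 : β < 1) {x : ℝ} (hx : 0 ≤ x) : abelSum β x ≤ 1 := by
  have h1β : 0 < 1 - β := by linarith
  have hS1 : 0 < S β 0 1 := (by positivity : 0 < exp (-2) * (1 - β) / 1).trans_le
    (exp_neg_two_mul_div_le_S_zero hβ0 hβ1 le_rfl)
  have key : ∀ ε, 0 < ε ∧ β * (1 + ε) < 1 → abelSum β x ≤ exp (ε * x) := by
    rintro ε ⟨hε, hβε⟩
    obtain ⟨C, hC⟩ := exists_S_le hβ0 hε hβε 0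
    refine le_of_eventually_mul_pow_le (M := 0) (C := C * exp ε) hS1 (exp_pos _).le
      (.of_forall fun n => ?_)
    calc S β 0 1 * abelSum β x ^ n = S β 0 (1 + n * x) := by
          rw [S_zero_add_mul hβ0 hβ1 hx zero_le_one, mul_comm]
      _ ≤ C * (exp (ε * (1 + n * x)) * (1 + n * x + 1) ^ 0) := hC _ (by positivity)
      _ = C * exp ε * n ^ 0 * exp (ε * x) ^ n := by
          rw [← exp_nat_mul, pow_zero, pow_zero, mul_one, mul_one, mul_assoc, ← exp_add]
          ring_nf
  have hlim : Tendsto (fun ε => exp (ε * x)) (𝓝[>] 0) (𝓝 1) := by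
    rw [← exp_zero]
    exact ((continuous_exp.comp (continuous_id.mul continuous_const)).tendsto' 0 _
      (by simp)).mono_left nhdsWithin_le_nhds
  exact ge_of_tendsto hlim ((eventually_pos_and_mul_one_add_lt_one hβ1).mono key)

lemma one_le_abelSum (hβ0 : 0 ≤ β) (hβ1 : β < 1) {x : ℝ} (hx : 0 ≤ x) : 1 ≤ abelSum β x := by
  have h1β : 0 < 1 - β := by linarith
  refine le_of_eventually_mul_pow_le (M := 1) (C := S β 0 1)
    (by positivity : 0 < exp (-2) * (1 - β) / (1 + x)) (tsum_nonneg (abelTerm_nonneg hβ0 hx))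
    (eventually_atTop.mpr ⟨1, fun n hn => ?_⟩)
  have hn : (1 : ℝ) ≤ n := by exact_mod_cast hn
  have hlow := exp_neg_two_mul_div_le_S_zero hβ0 hβ1 (α := 1 + n * x) (by nlinarith)
  rw [S_zero_add_mul hβ0 hβ1 hx zero_le_one] at hlow
  calc exp (-2) * (1 - β) / (1 + x) * 1 ^ n ≤ n * (exp (-2) * (1 - β) / (1 + n * x)) := by
        rw [one_pow, mul_one, ← mul_div_assoc, div_le_div_iff₀ (by positivity) (by positivity)]
        have : 0 ≤ exp (-2) * (1 - β) := by positivity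
        nlinarith
    _ ≤ n * (abelSum β x ^ n * S β 0 1) := by gcongr
    _ = S β 0 1 * n ^ 1 * abelSum β x ^ n := by ring

lemma abelSum_eq_one (hβ0 : 0 ≤ β) (hβ1 : β < 1) {x : ℝ} (hx : 0 ≤ x) : abelSum β x = 1 :=
  (abelSum_le_one hβ0 hβ1 hx).antisymm (one_le_abelSum hβ0 hβ1 hx)

lemma term_zero_succ (β α : ℝ) (k : ℕ) :
    term β 0 α (k + 1) = abelTerm β α (k + 1) + β * term β 0 (α + β) k := by
  simp only [term, abelTerm, abelPoly, add_zero, Nat.factorial_succ]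
  push_cast
  rw [show α + β + β * k = α + β * (k + 1) by ring]
  field_simp
  ring

lemma term_succ_succ (β α : ℝ) (m k : ℕ) :
    term β (m + 1) α (k + 1) = α * term β m α (k + 1) + β * term β (m + 1) (α + β) k := by
  simp only [term, Nat.factorial_succ]
  push_cast
  rw [show α + β + β * k = α + β * (k + 1) by ring, show k + 1 + (m + 1) = k + m + 2 by ring,
    show k + 1 + m = k + m + 1 by ring]
  field_simp
  ring

lemma S_zero_eq_abelSum_add (hβ0 : 0 ≤ β) (hβ1 : β < 1) (hα : 0 ≤ α) :
    S β 0 α = abelSum β α + β * S β 0 (α + β) :=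
  tsum_eq_tsum_add_mul_tsum_of_succ (summable_abelTerm hβ0 hβ1 hα)
    (summable_term hβ0 hβ1 (by positivity) 0) (by simp [term, abelTerm, abelPoly])
    (term_zero_succ β α)

lemma S_succ_eq (hβ0 : 0 ≤ β) (hβ1 : β < 1) (hα : 0 ≤ α) (m : ℕ) :
    S β (m + 1) α = α * S β m α + β * S β (m + 1) (α + β) := by
  rw [S, S, ← tsum_mul_left]
  exact tsum_eq_tsum_add_mul_tsum_of_succ ((summable_term hβ0 hβ1 hα m).mul_left α)
    (summable_term hβ0 hβ1 (by positivity) (m + 1))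
    (by rw [term, term, Nat.cast_zero, mul_zero, add_zero, zero_add, zero_add, pow_succ]; ring)
    (term_succ_succ β α m)

lemma S_zero_eq (hβ0 : 0 ≤ β) (hβ1 : β < 1) (hα : 0 ≤ α) : S β 0 α = (1 - β)⁻¹ := by
  have hshift : S β 0 (α + β) = S β 0 α := by
    rw [add_comm, ← abelSum_mul_S_zero hβ0 hβ1 hβ0 hα, abelSum_eq_one hβ0 hβ1 hβ0, one_mul]
  have h := S_zero_eq_abelSum_add hβ0 hβ1 hα
  rw [abelSum_eq_one hβ0 hβ1 hα, hshift] at h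
  exact eq_inv_of_mul_eq_one_left (by linarith)

lemma eq_zero_of_eq_mul_comp_add {h : ℝ → ℝ} {C : ℝ} {M : ℕ} (hβ0 : 0 ≤ β)
    (hβε : β * exp (ε * β) < 1) (hrec : ∀ α, 0 ≤ α → h α = β * h (α + β))
    (hbd : ∀ α, 0 ≤ α → |h α| ≤ C * (exp (ε * α) * (α + 1) ^ M)) (hα : 0 ≤ α) : h α = 0 := by
  by_contra hne
  have hpow : ∀ n : ℕ, h α = β ^ n * h (α + n * β) := fun n => by
    induction n with
    | zero => simp
    | succ n ih =>
      rw [ih, hrec _ (by positivity)]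
      push_cast
      ring_nf
  have hC : 0 ≤ C :=
    (mul_nonneg_iff_of_pos_right (by positivity)).mp ((abs_nonneg _).trans (hbd α hα))
  refine hβε.not_ge (le_of_eventually_mul_pow_le (r := 1) (M := M)
    (C := C * exp (ε * α) * (α + β + 1) ^ M) (abs_pos.mpr hne) (by positivity)
    (eventually_atTop.mpr ⟨1, fun n hn => ?_⟩))
  have hn : (1 : ℝ) ≤ n := by exact_mod_cast hn
  calc |h α| * 1 ^ n = β ^ n * |h (α + n * β)| := by
        rw [one_pow, mul_one, hpow n, abs_mul, abs_of_nonneg (by positivity)]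
    _ ≤ β ^ n * (C * (exp (ε * (α + n * β)) * (α + n * β + 1) ^ M)) := by
        gcongr
        exact hbd _ (by positivity)
    _ ≤ β ^ n * (C * (exp (ε * α) * exp (ε * β) ^ n * ((α + β + 1) * n) ^ M)) := by
        rw [← exp_nat_mul, ← exp_add]
        gcongr
        · ring_nf
          rfl
        · nlinarith
    _ = C * exp (ε * α) * (α + β + 1) ^ M * n ^ M * (β * exp (ε * β)) ^ n := by
        rw [mul_pow, mul_pow]
        ring

lemma S_succ_eq_of_recurrence (hβ0 : 0 ≤ β) (hβ1 : β < 1) {m : ℕ} {Q : ℝ → ℝ} {D : ℝ}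
    (hrec : ∀ α, 0 ≤ α → Q α = α * S β m α + β * Q (α + β))
    (hQ0 : ∀ α, 0 ≤ α → 0 ≤ Q α) (hQ : ∀ α, 0 ≤ α → Q α ≤ D * (α + 1) ^ (m + 1))
    (hα : 0 ≤ α) : S β (m + 1) α = Q α := by
  obtain ⟨ε, hε, hβε⟩ := (eventually_pos_and_mul_one_add_lt_one hβ1).exists
  obtain ⟨C, hC⟩ := exists_S_le hβ0 hε hβε (m + 1)
  have hβexp : β * exp (ε * β) < 1 :=
    (mul_le_mul_of_nonneg_left (exp_mul_lt_one_add hβ0 hε hβε).le hβ0).trans_lt hβε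
  refine sub_eq_zero.mp (eq_zero_of_eq_mul_comp_add (h := fun a => S β (m + 1) a - Q a)
    (C := C + D) (M := m + 1) hβ0 hβexp (fun a ha => ?_) (fun a ha => ?_) hα)
  · rw [S_succ_eq hβ0 hβ1 ha, hrec a ha]
    ring
  · have hS0 : 0 ≤ S β (m + 1) a := tsum_nonneg (term_nonneg hβ0 ha _)
    have hD : 0 ≤ D :=
      (mul_nonneg_iff_of_pos_right (by positivity)).mp ((hQ0 a ha).trans (hQ a ha))
    have hB : (a + 1) ^ (m + 1) ≤ exp (ε * a) * (a + 1) ^ (m + 1) :=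
      le_mul_of_one_le_left (by positivity) (one_le_exp (by positivity))
    have := hC a ha
    have := hQ a ha
    have := hQ0 a ha
    rw [abs_le]
    constructor <;> nlinarith [mul_le_mul_of_nonneg_left hB hD]

lemma S_one_eq (hβ0 : 0 ≤ β) (hβ1 : β < 1) (hα : 0 ≤ α) :
    S β 1 α = α * (1 - β)⁻¹ ^ 2 + β ^ 2 * (1 - β)⁻¹ ^ 3 := by
  have h1β : 1 - β ≠ 0 := by linarith
  have hP : 0 < (1 - β)⁻¹ := inv_pos.mpr (by linarith)
  refine S_succ_eq_of_recurrence (m := 0)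
    (Q := fun a => a * (1 - β)⁻¹ ^ 2 + β ^ 2 * (1 - β)⁻¹ ^ 3)
    (D := (1 - β)⁻¹ ^ 2 + β ^ 2 * (1 - β)⁻¹ ^ 3) hβ0 hβ1
    (fun a ha => ?_) (fun a ha => by positivity) (fun a ha => ?_) hα
  · rw [S_zero_eq hβ0 hβ1 ha]
    field_simp
    ring
  · rw [zero_add, pow_one]
    nlinarith [mul_nonneg ha (by positivity : 0 ≤ β ^ 2 * (1 - β)⁻¹ ^ 3), pow_pos hP 2]

theorem S_two_eq (hβ0 : 0 ≤ β) (hβ1 : β < 1) (hα : 0 ≤ α) :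
    S β 2 α = α ^ 2 * (1 - β)⁻¹ ^ 3 + 3 * α * β ^ 2 * (1 - β)⁻¹ ^ 4 +
      β ^ 3 * (1 + 2 * β) * (1 - β)⁻¹ ^ 5 := by
  have h1β : 1 - β ≠ 0 := by linarith
  have hP : 0 < (1 - β)⁻¹ := inv_pos.mpr (by linarith)
  refine S_succ_eq_of_recurrence (m := 1)
    (Q := fun a => a ^ 2 * (1 - β)⁻¹ ^ 3 + 3 * a * β ^ 2 * (1 - β)⁻¹ ^ 4 +
      β ^ 3 * (1 + 2 * β) * (1 - β)⁻¹ ^ 5)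
    (D := (1 - β)⁻¹ ^ 3 + 3 * (1 - β)⁻¹ ^ 4 + 3 * (1 - β)⁻¹ ^ 5)
    hβ0 hβ1 (fun a ha => ?_) (fun a ha => by positivity) (fun a ha => ?_) hα
  · rw [S_one_eq hβ0 hβ1 ha]
    field_simp
    ring
  · have hβ2 : β ^ 2 ≤ 1 := by nlinarith
    have hβ3 : β ^ 3 * (1 + 2 * β) ≤ 3 := by nlinarith
    have h1 : a ^ 2 ≤ (a + 1) ^ 2 := by nlinarith
    have h2 : a * β ^ 2 ≤ (a + 1) ^ 2 := by nlinarith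
    have h3 : 1 ≤ (a + 1) ^ 2 := by nlinarith
    show _ ≤ _ * (a + 1) ^ 2
    nlinarith [mul_le_mul_of_nonneg_right h1 (pow_pos hP 3).le,
      mul_le_mul_of_nonneg_right h2 (pow_pos hP 4).le,
      mul_le_mul_of_nonneg_right hβ3 (pow_pos hP 5).le,
      mul_le_mul_of_nonneg_right h3 (pow_pos hP 5).le]

end GenPoisson

theorem jain_S3 (α β : ℝ) (hα : 0 < α) (hβ0 : 0 ≤ β) (hβ1 : β < 1)
    (p : ℝ) (hp : p = 1 / (1 - β)) :
    HasSum (fun k : ℕ =>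
      (α + β * k) ^ (k + 2) / (Nat.factorial k) * Real.exp (-(α + β * k)))
      (α ^ 2 * p ^ 3 + 3 * α * β ^ 2 * p ^ 4 + β ^ 3 * (1 + 2 * β) * p ^ 5) := by
  rw [hp, one_div, ← GenPoisson.S_two_eq hβ0 hβ1 hα.le]
  exact (GenPoisson.summable_term hβ0 hβ1 hα.le 2).hasSum
end
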